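/- Let f(x) = min_{i∈I} max_{j∈J_i} (⟨a_{ij}, x⟩ + b_{ij}) be a piecewise affine min–max function on an open set X ⊆ ℝⁿ (I and all J_i finite). Then for every x̄ ∈ X, ⋃_{p∈S, f'(x̄;p)>0} ⋂_{i∈I(x̄,p)} Argmax_{v∈∂f_i(x̄)} ⟨v,p⟩ = Limsup_{x→x̄, f(x)>f(x̄)} ∂f(x) (no closure needed). -/

import Mathlib

open Filter Topology Set Metric
open scoped RealInnerProductSpace

noncomputable section

/-- `n`-dimensional Euclidean space. -/
abbrev En (n : ℕ) := EuclideanSpace ℝ (Fin n)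

/-- `d` is the Hadamard directional derivative map of `f` at `x`:
for each direction `p`, `(f (x + t • p') - f x)/t → d p` as `t ↓ 0`, `p' → p`. -/
def HadamardDD {n : ℕ} (f : En n → ℝ) (x : En n) (d : En n → ℝ) : Prop :=
  ∀ p : En n,
    Tendsto (fun q : ℝ × En n => (f (x + q.1 • q.2) - f x) / q.1)
      ((𝓝[>] (0 : ℝ)) ×ˢ 𝓝 p) (𝓝 (d p))

/-- The Fréchet subdifferential of `f` at `x`. -/
def FSubdiff {n : ℕ} (f : En n → ℝ) (x : En n) : Set (En n) :=
  {v | ∀ ε > (0 : ℝ), ∀ᶠ y in 𝓝 x, f y - f x - ⟪v, y - x⟫ ≥ -ε * ‖y - x‖}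

/-- The outer (Painlevé–Kuratowski) limit of Fréchet subdifferentials of `f`
along sequences `x_k → xb` with `f x_k > f xb`. -/
def OuterLim {n : ℕ} (f : En n → ℝ) (xb : En n) : Set (En n) :=
  {y | ∃ xk yk : ℕ → En n, Tendsto xk atTop (𝓝 xb) ∧ (∀ k, f xb < f (xk k)) ∧
    (∀ k, yk k ∈ FSubdiff f (xk k)) ∧ Tendsto yk atTop (𝓝 y)}

/-!
Near `xb` every piece is exact to first order: `fi i (xb + u) = fi i xb + di i u` for small `u`,
and the pieces of `f` active at `xb + u` are the `i ∈ I(xb)` minimizing `di i u`. Each `fi i` is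
convex, so its Fréchet subgradients at `x` are the `v` with
`⟪v, ·⟫ ≤ max_{j active at x} ⟪a i j, ·⟫`, and they are global subgradients. If `y` lies in the
union for the direction `p`, it is a Fréchet subgradient of `f` at every point `xb + t • p` with
small `t > 0`. Conversely, along a sequence `x k → xb` only finitely many activity patterns occur,
so one of them recurs infinitely often; for `p` the direction of `x K - xb`, with `x K` close to
`xb` and carrying that pattern, the limit `y` is a subgradient of every relevant `fi i` both at
`x K` and at `xb`, which forces `⟪y, p⟫ = di i p`.
-/

section ActiveIndices

variable {X β ι : Type*} [TopologicalSpace X] [LinearOrder β] [TopologicalSpace β]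
  [OrderClosedTopology β] [Finite ι] {F : ι → X → β} {g : X → β} {x : X}

theorem eventually_active_subset_of_isLeast (hF : ∀ i, ContinuousAt (F i) x)
    (hg : ∀ y, IsLeast (range fun i => F i y) (g y)) :
    ∀ᶠ y in 𝓝 x, {i | F i y = g y} ⊆ {i | F i x = g x} := by
  obtain ⟨i₀, hi₀ : F i₀ x = g x⟩ := (hg x).1
  have h : ∀ i, ∀ᶠ y in 𝓝 x, F i y = g y → F i x = g x := fun i => by
    by_cases hi : F i x = g x
    · exact Eventually.of_forall fun _ _ => hi
    have hlt : F i₀ x < F i x := hi₀ ▸ lt_of_le_of_ne ((hg x).2 ⟨i, rfl⟩) (Ne.symm hi)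
    filter_upwards [(hF i₀).eventually_lt (hF i) hlt] with y hy hiy
    exact absurd ((hg y).2 ⟨i₀, rfl⟩) (hiy ▸ not_le.2 hy)
  exact (eventually_all.2 h).mono fun _ hy i => hy i

theorem eventually_active_subset_of_isGreatest (hF : ∀ i, ContinuousAt (F i) x)
    (hg : ∀ y, IsGreatest (range fun i => F i y) (g y)) :
    ∀ᶠ y in 𝓝 x, {i | F i y = g y} ⊆ {i | F i x = g x} :=
  eventually_active_subset_of_isLeast (β := βᵒᵈ) hF hg

end ActiveIndices

section MaxAffine

variable {E κ : Type*} [NormedAddCommGroup E] [InnerProductSpace ℝ E]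

def IsMaxAffine (A : κ → E) (B : κ → ℝ) (g : E → ℝ) : Prop :=
  ∀ x, IsGreatest (range fun j => ⟪A j, x⟫ + B j) (g x)

/-- `d` is the support function of `{A j | j ∈ J}`; when `J` is the set of pieces of a
max-affine function active at `x`, `d` is its directional derivative at `x`. -/
def IsSupportFun (A : κ → E) (J : Set κ) (d : E → ℝ) : Prop :=
  ∀ u, IsGreatest {r | ∃ j, j ∈ J ∧ r = ⟪A j, u⟫} (d u)

variable {A : κ → E} {B : κ → ℝ} {g : E → ℝ} {J J' : Set κ} {d d' : E → ℝ} {x : E}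

theorem exists_isSupportFun [Finite κ] (hJ : J.Nonempty) : ∃ d, IsSupportFun A J d := by
  refine ⟨fun u => sSup {r | ∃ j, j ∈ J ∧ r = ⟪A j, u⟫}, fun u => ?_⟩
  have hfin : {r | ∃ j, j ∈ J ∧ r = ⟪A j, u⟫}.Finite :=
    (finite_range fun j => ⟪A j, u⟫).subset fun _ ⟨j, _, hr⟩ => ⟨j, hr.symm⟩
  obtain ⟨j, hj⟩ := hJ
  exact ⟨Nonempty.csSup_mem ⟨_, j, hj, rfl⟩ hfin, fun _ hr => le_csSup hfin.bddAbove hr⟩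

theorem IsSupportFun.le_of_subset (hd : IsSupportFun A J d) (hd' : IsSupportFun A J' d')
    (hJ : J ⊆ J') (u : E) : d u ≤ d' u := by
  obtain ⟨j, hj, hdj⟩ := (hd u).1
  exact hdj ▸ (hd' u).2 ⟨j, hJ hj, rfl⟩

theorem IsSupportFun.smul (hd : IsSupportFun A J d) {t : ℝ} (ht : 0 ≤ t) (u : E) :
    d (t • u) = t * d u := by
  apply le_antisymm
  · obtain ⟨j, hj, hdj⟩ := (hd (t • u)).1
    rw [hdj, real_inner_smul_right]
    exact mul_le_mul_of_nonneg_left ((hd u).2 ⟨j, hj, rfl⟩) ht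
  · obtain ⟨j, hj, hdj⟩ := (hd u).1
    rw [hdj, ← real_inner_smul_right]
    exact (hd _).2 ⟨j, hj, rfl⟩

theorem IsMaxAffine.le (hg : IsMaxAffine A B g) (x : E) (j : κ) : ⟪A j, x⟫ + B j ≤ g x :=
  (hg x).2 ⟨j, rfl⟩

theorem continuous_inner_add_const (a : E) (c : ℝ) : Continuous fun x => ⟪a, x⟫ + c :=
  (continuous_const.inner continuous_id).add continuous_const

theorem IsMaxAffine.continuous [Finite κ] (hg : IsMaxAffine A B g) : Continuous g := by
  have := Fintype.ofFinite κ
  have : Nonempty κ := let ⟨j, _⟩ := (hg 0).1; ⟨j⟩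
  have hsup : g = fun x => Finset.univ.sup' Finset.univ_nonempty fun j => ⟪A j, x⟫ + B j := by
    funext x
    obtain ⟨j, hj⟩ := (hg x).1
    exact le_antisymm (hj ▸ Finset.le_sup' (fun j => ⟪A j, x⟫ + B j) (Finset.mem_univ j))
      (Finset.sup'_le _ _ fun j _ => hg.le x j)
  rw [hsup]
  exact Continuous.finset_sup'_apply _ fun j _ => continuous_inner_add_const (A j) (B j)

theorem IsMaxAffine.eventually_eq_add [Finite κ] (hg : IsMaxAffine A B g)
    (hd : IsSupportFun A {j | ⟪A j, x⟫ + B j = g x} d) :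
    ∀ᶠ u in 𝓝 0, g (x + u) = g x + d u := by
  have hx : Tendsto (fun u => x + u) (𝓝 0) (𝓝 x) := by
    simpa using (continuous_const_add x).tendsto 0
  filter_upwards [hx.eventually (eventually_active_subset_of_isGreatest
    (fun j => (continuous_inner_add_const (A j) (B j)).continuousAt) hg)] with u hu
  obtain ⟨j, hj⟩ := (hg (x + u)).1
  obtain ⟨j', hj', hdj'⟩ := (hd u).1
  have hjx : ⟪A j, x⟫ + B j = g x := hu hj
  have hj'x : ⟪A j', x⟫ + B j' = g x := hj'
  have hle := (hd u).2 ⟨j, hjx, rfl⟩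
  have hge := hg.le (x + u) j'
  simp only [inner_add_right] at hj hge
  linarith

theorem IsMaxAffine.add_inner_le_of_inner_le (hg : IsMaxAffine A B g)
    (hd : IsSupportFun A {j | ⟪A j, x⟫ + B j = g x} d) {v : E} (hv : ∀ u, ⟪v, u⟫ ≤ d u)
    (z : E) : g x + ⟪v, z - x⟫ ≤ g z := by
  obtain ⟨j, hj, hdj⟩ := (hd (z - x)).1
  have hjx : ⟪A j, x⟫ + B j = g x := hj
  have hvj := hv (z - x)
  have hgz := hg.le z j
  rw [hdj] at hvj
  simp only [inner_sub_right] at hvj ⊢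
  linarith

end MaxAffine

theorem tendsto_smul_const_nhdsGT_zero {E : Type*} [NormedAddCommGroup E] [NormedSpace ℝ E]
    (u : E) : Tendsto (fun t : ℝ => t • u) (𝓝[>] 0) (𝓝 0) := by
  have : Continuous fun t : ℝ => t • u := continuous_id.smul continuous_const
  simpa using (this.tendsto 0).mono_left nhdsWithin_le_nhds

section FrechetSubdifferential

variable {n : ℕ} {x v : En n}

theorem mem_fSubdiff_of_forall_add_inner_le {g : En n → ℝ}
    (hv : ∀ z, g x + ⟪v, z - x⟫ ≤ g z) : v ∈ FSubdiff g x := fun ε hε =>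
  Eventually.of_forall fun z => by nlinarith [hv z, norm_nonneg (z - x)]

theorem mem_fSubdiff_of_le_of_eq {g h : En n → ℝ} (hle : ∀ y, g y ≤ h y) (heq : g x = h x)
    (hv : v ∈ FSubdiff g x) : v ∈ FSubdiff h x := fun ε hε =>
  (hv ε hε).mono fun y hy => by linarith [hle y]

theorem mem_fSubdiff_of_isLeast {ι : Type*} [Finite ι] {F : ι → En n → ℝ} {f : En n → ℝ}
    (hF : ∀ i, ContinuousAt (F i) x) (hf : ∀ y, IsLeast (range fun i => F i y) (f y))
    (hv : ∀ i, F i x = f x → ∀ z, F i x + ⟪v, z - x⟫ ≤ F i z) : v ∈ FSubdiff f x := by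
  intro ε hε
  filter_upwards [eventually_active_subset_of_isLeast hF hf] with y hy
  obtain ⟨i, hi : F i y = f y⟩ := (hf y).1
  have hix : F i x = f x := hy hi
  have hvi := hv i hix y
  have : 0 ≤ ε * ‖y - x‖ := by positivity
  linarith

variable {κ : Type*} [Finite κ] {A : κ → En n} {B : κ → ℝ} {g d : En n → ℝ}

theorem IsMaxAffine.inner_le_of_mem_fSubdiff (hg : IsMaxAffine A B g)
    (hd : IsSupportFun A {j | ⟪A j, x⟫ + B j = g x} d) (hv : v ∈ FSubdiff g x) (u : En n) :
    ⟪v, u⟫ ≤ d u := by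
  refine le_of_forall_pos_le_add fun δ hδ => ?_
  set ε := δ / (‖u‖ + 1)
  have hεu : ε * ‖u‖ ≤ δ := by
    rw [div_mul_eq_mul_div, div_le_iff₀ (by positivity)]
    nlinarith [norm_nonneg u]
  have hray := tendsto_smul_const_nhdsGT_zero u
  have hray' : Tendsto (fun t : ℝ => x + t • u) (𝓝[>] 0) (𝓝 x) := by
    simpa using tendsto_const_nhds.add hray
  obtain ⟨t, ht : 0 < t, hfr, hexp⟩ := (eventually_mem_nhdsWithin.and
    ((hray'.eventually (hv ε (by positivity))).and
      (hray.eventually (hg.eventually_eq_add hd)))).exists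
  rw [add_sub_cancel_left, hexp, hd.smul ht.le, real_inner_smul_right, norm_smul,
    Real.norm_of_nonneg ht.le] at hfr
  have : t * ⟪v, u⟫ ≤ t * (d u + ε * ‖u‖) := by linarith
  linarith [le_of_mul_le_mul_left this ht]

theorem IsMaxAffine.mem_fSubdiff_iff (hg : IsMaxAffine A B g)
    (hd : IsSupportFun A {j | ⟪A j, x⟫ + B j = g x} d) :
    v ∈ FSubdiff g x ↔ ∀ u, ⟪v, u⟫ ≤ d u :=
  ⟨hg.inner_le_of_mem_fSubdiff hd,
    fun h => mem_fSubdiff_of_forall_add_inner_le (hg.add_inner_le_of_inner_le hd h)⟩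

end FrechetSubdifferential

theorem mem_outerLim_of_eventually {n : ℕ} {α : Type*} {l : Filter α} [l.IsCountablyGenerated]
    [l.NeBot] {f : En n → ℝ} {xb y : En n} {x : α → En n} (hx : Tendsto x l (𝓝 xb))
    (h : ∀ᶠ a in l, f xb < f (x a) ∧ y ∈ FSubdiff f (x a)) : y ∈ OuterLim f xb := by
  obtain ⟨s, hs⟩ := exists_seq_tendsto l
  obtain ⟨N, hN⟩ := eventually_atTop.1 (hs.eventually h)
  have hsN : Tendsto (fun k => s (k + N)) atTop l := hs.comp (tendsto_add_atTop_nat N)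
  exact ⟨fun k => x (s (k + N)), fun _ => y, hx.comp hsN, fun k => (hN _ le_add_self).1,
    fun k => (hN _ le_add_self).2, tendsto_const_nhds⟩

section MinOfMaxAffine

variable {E ι : Type*} {fi : ι → E → ℝ} {f : E → ℝ} {xb u : E} {di : ι → E → ℝ}

section Add

variable [Add E]

theorem active_iff_minimizes_deriv (hf : ∀ x, IsLeast (range fun i => fi i x) (f x))
    (hexp : ∀ i, fi i (xb + u) = fi i xb + di i u)
    (hact : {i | fi i (xb + u) = f (xb + u)} ⊆ {i | fi i xb = f xb}) (i : ι) :
    fi i (xb + u) = f (xb + u) ↔ fi i xb = f xb ∧ ∀ i', fi i' xb = f xb → di i u ≤ di i' u := by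
  constructor
  · intro hi
    have hix : fi i xb = f xb := hact hi
    refine ⟨hix, fun i' hi' => ?_⟩
    linarith [(hf (xb + u)).2 ⟨i', rfl⟩, hexp i, hexp i']
  · rintro ⟨hix, hmin⟩
    obtain ⟨i', hi' : fi i' (xb + u) = f (xb + u)⟩ := (hf (xb + u)).1
    have hi'x : fi i' xb = f xb := hact hi'
    refine le_antisymm ?_ ((hf (xb + u)).2 ⟨i, rfl⟩)
    linarith [hmin i' hi'x, hexp i, hexp i']

theorem lt_apply_add_iff_pos_deriv (hf : ∀ x, IsLeast (range fun i => fi i x) (f x))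
    (hexp : ∀ i, fi i (xb + u) = fi i xb + di i u)
    (hact : {i | fi i (xb + u) = f (xb + u)} ⊆ {i | fi i xb = f xb}) :
    f xb < f (xb + u) ↔ ∀ i, fi i xb = f xb → 0 < di i u := by
  constructor
  · intro h i hi
    linarith [(hf (xb + u)).2 ⟨i, rfl⟩, hexp i]
  · intro h
    obtain ⟨i, hi : fi i (xb + u) = f (xb + u)⟩ := (hf (xb + u)).1
    have hix : fi i xb = f xb := hact hi
    linarith [h i hix, hexp i]

end Add

variable [NormedAddCommGroup E] [InnerProductSpace ℝ E] [Finite ι] {κ : ι → Type*}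
  [∀ i, Finite (κ i)] {a : (i : ι) → κ i → E} {b : (i : ι) → κ i → ℝ}

theorem eventually_eq_add_and_active_subset (hfi : ∀ i, IsMaxAffine (a i) (b i) (fi i))
    (hf : ∀ x, IsLeast (range fun i => fi i x) (f x))
    (hdi : ∀ i, IsSupportFun (a i) {j | ⟪a i j, xb⟫ + b i j = fi i xb} (di i)) :
    ∀ᶠ u in 𝓝 0, (∀ i, fi i (xb + u) = fi i xb + di i u) ∧
      {i | fi i (xb + u) = f (xb + u)} ⊆ {i | fi i xb = f xb} := by
  have hxb : Tendsto (fun u => xb + u) (𝓝 0) (𝓝 xb) := by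
    simpa using (continuous_const_add xb).tendsto 0
  exact (eventually_all.2 fun i => (hfi i).eventually_eq_add (hdi i)).and
    (hxb.eventually (eventually_active_subset_of_isLeast
      (fun i => (hfi i).continuous.continuousAt) hf))

end MinOfMaxAffine

section OuterLimit

variable {n : ℕ} {ι : Type*} [Finite ι] {κ : ι → Type*} [∀ i, Finite (κ i)]
  {a : (i : ι) → κ i → En n} {b : (i : ι) → κ i → ℝ} {fi : ι → En n → ℝ} {f : En n → ℝ}
  {xb y : En n} {di : ι → En n → ℝ}

theorem mem_outerLim_of_forall_argmax (hfi : ∀ i, IsMaxAffine (a i) (b i) (fi i))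
    (hf : ∀ x, IsLeast (range fun i => fi i x) (f x))
    (hdi : ∀ i, IsSupportFun (a i) {j | ⟪a i j, xb⟫ + b i j = fi i xb} (di i)) {p : En n}
    (hpos : ∀ i, fi i xb = f xb → 0 < di i p)
    (hmax : ∀ i, (fi i xb = f xb ∧ ∀ i', fi i' xb = f xb → di i p ≤ di i' p) →
      y ∈ FSubdiff (fi i) xb ∧ ⟪y, p⟫ = di i p) :
    y ∈ OuterLim f xb := by
  have hray := tendsto_smul_const_nhdsGT_zero p
  refine mem_outerLim_of_eventually (x := fun t => xb + t • p)
    (by simpa using tendsto_const_nhds.add hray) ?_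
  filter_upwards [eventually_mem_nhdsWithin,
    hray.eventually (eventually_eq_add_and_active_subset hfi hf hdi)] with t (ht : 0 < t) hloc
  obtain ⟨hexp, hact⟩ := hloc
  have hscale : ∀ i, di i (t • p) = t * di i p := fun i => (hdi i).smul ht.le p
  refine ⟨(lt_apply_add_iff_pos_deriv hf hexp hact).2 fun i hi => ?_,
    mem_fSubdiff_of_isLeast (fun i => (hfi i).continuous.continuousAt) hf fun i hi z => ?_⟩
  · rw [hscale]
    exact mul_pos ht (hpos i hi)
  · obtain ⟨hix, hmin⟩ := (active_iff_minimizes_deriv hf hexp hact i).1 hi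
    obtain ⟨hyi, hyp⟩ := hmax i ⟨hix, fun i' hi' =>
      le_of_mul_le_mul_left (by simpa only [hscale] using hmin i' hi') ht⟩
    have hglob := (hfi i).add_inner_le_of_inner_le (hdi i)
      (((hfi i).mem_fSubdiff_iff (hdi i)).1 hyi) z
    rw [hexp i, hscale, sub_add_eq_sub_sub, inner_sub_right, real_inner_smul_right, hyp]
    linarith

theorem IsMaxAffine.inner_le_of_frequently_mem_fSubdiff {κ : Type*} [Finite κ] {A : κ → En n}
    {B : κ → ℝ} {g d : En n → ℝ} {x₀ : En n} (hg : IsMaxAffine A B g)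
    (hd : IsSupportFun A {j | ⟪A j, x₀⟫ + B j = g x₀} d) {x v : ℕ → En n}
    (hv : ∃ᶠ k in atTop, {j | ⟪A j, x k⟫ + B j = g (x k)} = {j | ⟪A j, x₀⟫ + B j = g x₀} ∧
      v k ∈ FSubdiff g (x k))
    (hvy : Tendsto v atTop (𝓝 y)) (w : En n) : ⟪y, w⟫ ≤ d w := by
  have hclosed : IsClosed {v : En n | ∀ w, ⟪v, w⟫ ≤ d w} := by
    simp only [Set.ofPred_forall]
    exact isClosed_iInter fun w => isClosed_le (continuous_id.inner continuous_const)
      continuous_const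
  exact hclosed.mem_of_frequently_of_tendsto
    (hv.mono fun k ⟨hJ, hvk⟩ => (hg.mem_fSubdiff_iff (hJ ▸ hd)).1 hvk) hvy w

theorem IsMaxAffine.mem_fSubdiff_and_inner_eq_of_frequently {κ : Type*} [Finite κ]
    {A : κ → En n} {B : κ → ℝ} {g d : En n → ℝ} {x₀ u : En n} (hg : IsMaxAffine A B g)
    (hd : IsSupportFun A {j | ⟪A j, x₀⟫ + B j = g x₀} d)
    (hsub : {j | ⟪A j, x₀ + u⟫ + B j = g (x₀ + u)} ⊆ {j | ⟪A j, x₀⟫ + B j = g x₀})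
    (hexp : g (x₀ + u) = g x₀ + d u) {x v : ℕ → En n}
    (hv : ∃ᶠ k in atTop, {j | ⟪A j, x k⟫ + B j = g (x k)} =
      {j | ⟪A j, x₀ + u⟫ + B j = g (x₀ + u)} ∧ v k ∈ FSubdiff g (x k))
    (hvy : Tendsto v atTop (𝓝 y)) :
    y ∈ FSubdiff g x₀ ∧ ⟪y, u⟫ = d u := by
  obtain ⟨dK, hdK⟩ := exists_isSupportFun (A := A) (hg (x₀ + u)).1
  have hyK := hg.inner_le_of_frequently_mem_fSubdiff hdK hv hvy
  have hy : ∀ w, ⟪y, w⟫ ≤ d w := fun w => (hyK w).trans (hdK.le_of_subset hd hsub w)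
  refine ⟨(hg.mem_fSubdiff_iff hd).2 hy, le_antisymm (hy u) ?_⟩
  have := hg.add_inner_le_of_inner_le hdK hyK x₀
  rw [sub_add_cancel_left, inner_neg_right, hexp] at this
  linarith

theorem exists_argmax_of_mem_outerLim (hfi : ∀ i, IsMaxAffine (a i) (b i) (fi i))
    (hf : ∀ x, IsLeast (range fun i => fi i x) (f x))
    (hdi : ∀ i, IsSupportFun (a i) {j | ⟪a i j, xb⟫ + b i j = fi i xb} (di i))
    (hy : y ∈ OuterLim f xb) :
    ∃ p : En n, ‖p‖ = 1 ∧ (∀ i, fi i xb = f xb → 0 < di i p) ∧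
      ∀ i, (fi i xb = f xb ∧ ∀ i', fi i' xb = f xb → di i p ≤ di i' p) →
        y ∈ FSubdiff (fi i) xb ∧ ⟪y, p⟫ = di i p := by
  obtain ⟨x, v, hx, hfx, hv, hvy⟩ := hy
  obtain ⟨c, hc⟩ : ∃ c : (i : ι) → Prop × (κ i → Prop), ∃ᶠ k in atTop,
      (fun i => (fi i (x k) = f (x k), fun j => ⟪a i j, x k⟫ + b i j = fi i (x k))) = c :=
    frequently_exists.1 (Frequently.of_forall fun k => ⟨_, rfl⟩)
  have hnear := ((tendsto_sub_nhds_zero_iff.2 hx).eventually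
    (eventually_eq_add_and_active_subset hfi hf hdi)).and (hx.eventually (eventually_all.2
      fun i => eventually_active_subset_of_isGreatest
        (fun j => (continuous_inner_add_const (a i j) (b i j)).continuousAt) (hfi i)))
  obtain ⟨K, hK, ⟨hexp, hact⟩, hsub⟩ := (hc.and_eventually hnear).exists
  set u := x K - xb
  have hu : xb + u = x K := add_sub_cancel xb (x K)
  have hfK := hfx K
  rw [← hu] at hK hsub hfK
  have hu0 : u ≠ 0 := fun h => hfK.ne (by rw [h, add_zero])
  have hpat : ∃ᶠ k in atTop, ∀ i, (fi i (x k) = f (x k)) = (fi i (xb + u) = f (xb + u)) ∧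
      {j | ⟪a i j, x k⟫ + b i j = fi i (x k)} =
        {j | ⟪a i j, xb + u⟫ + b i j = fi i (xb + u)} :=
    hc.mono fun k hk i => ⟨congrArg Prod.fst (congrFun (hk.trans hK.symm) i),
      congrArg Set.ofPred (congrArg Prod.snd (congrFun (hk.trans hK.symm) i))⟩
  have hinv : 0 < ‖u‖⁻¹ := inv_pos.2 (norm_pos_iff.2 hu0)
  have hscale : ∀ i, di i (‖u‖⁻¹ • u) = ‖u‖⁻¹ * di i u := fun i => (hdi i).smul hinv.le u
  refine ⟨‖u‖⁻¹ • u, norm_smul_inv_norm hu0, fun i hi => ?_, ?_⟩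
  · rw [hscale]
    exact mul_pos hinv ((lt_apply_add_iff_pos_deriv hf hexp hact).1 hfK i hi)
  rintro i ⟨hix, hmin⟩
  have hiK : fi i (xb + u) = f (xb + u) := (active_iff_minimizes_deriv hf hexp hact i).2
    ⟨hix, fun i' hi' => le_of_mul_le_mul_left (by simpa only [hscale] using hmin i' hi') hinv⟩
  obtain ⟨hyi, hyu⟩ := (hfi i).mem_fSubdiff_and_inner_eq_of_frequently (hdi i) (hsub i) (hexp i)
    (hpat.mono fun k hk => ⟨(hk i).2, mem_fSubdiff_of_le_of_eq (fun z => (hf z).2 ⟨i, rfl⟩)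
      ((hk i).1.mpr hiK).symm (hv k)⟩) hvy
  exact ⟨hyi, by rw [real_inner_smul_right, hyu, hscale]⟩

end OuterLimit

theorem union_eq_outerLim_piecewise_affine_general {n : ℕ} {ι : Type*} [Fintype ι]
    {κ : ι → Type*} [∀ i, Fintype (κ i)]
    (a : (i : ι) → κ i → En n) (b : (i : ι) → κ i → ℝ)
    (fi : ι → En n → ℝ)
    (hfi : ∀ (i : ι) (x : En n),
      IsGreatest (Set.range fun j : κ i => ⟪a i j, x⟫ + b i j) (fi i x))
    (f : En n → ℝ)
    (hf : ∀ x : En n, IsLeast (Set.range fun i => fi i x) (f x))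
    (xb : En n)
    (di : ι → En n → ℝ)
    (hdi : ∀ (i : ι) (p : En n),
      IsGreatest {r : ℝ | ∃ j : κ i, ⟪a i j, xb⟫ + b i j = fi i xb ∧ r = ⟪a i j, p⟫}
        (di i p)) :
    {y : En n | ∃ p : En n, ‖p‖ = 1 ∧
        (∀ i : ι, fi i xb = f xb → 0 < di i p) ∧
        (∀ i : ι,
          (fi i xb = f xb ∧ ∀ i' : ι, fi i' xb = f xb → di i p ≤ di i' p) →
            y ∈ FSubdiff (fi i) xb ∧ ⟪y, p⟫ = di i p)} = OuterLim f xb := by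
  ext y
  exact ⟨fun ⟨_, _, hpos, hmax⟩ =>
    mem_outerLim_of_forall_argmax hfi hf (fun i => hdi i) hpos hmax,
    exists_argmax_of_mem_outerLim hfi hf fun i => hdi i⟩

/-- for a piecewise affine min–max function
`f = min_i max_j (⟪a i j, ·⟫ + b i j)`, the union over unit `p` with `f'(xb;p) > 0` of
`⋂_{i ∈ I(xb,p)} Argmax_{v ∈ ∂f_i(xb)} ⟪v,p⟫` equals the outer limit of Fréchet
subdifferentials of `f` along `x → xb`, `f x > f xb` (no closure needed). -/
theorem union_eq_outerLim_piecewise_affine {n : ℕ} {ι : Type*} [Fintype ι]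
    {κ : ι → Type*} [∀ i, Fintype (κ i)]
    (a : (i : ι) → κ i → En n) (b : (i : ι) → κ i → ℝ)
    (fi : ι → En n → ℝ)
    (hfi : ∀ (i : ι) (x : En n),
      IsGreatest (Set.range fun j : κ i => ⟪a i j, x⟫ + b i j) (fi i x))
    (f : En n → ℝ)
    (hf : ∀ x : En n, IsLeast (Set.range fun i => fi i x) (f x))
    (X : Set (En n)) (hX : IsOpen X) (xb : En n) (hxb : xb ∈ X)
    (di : ι → En n → ℝ)
    (hdi : ∀ (i : ι) (p : En n),
      IsGreatest {r : ℝ | ∃ j : κ i, ⟪a i j, xb⟫ + b i j = fi i xb ∧ r = ⟪a i j, p⟫}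
        (di i p)) :
    {y : En n | ∃ p : En n, ‖p‖ = 1 ∧
        (∀ i : ι, fi i xb = f xb → 0 < di i p) ∧
        (∀ i : ι,
          (fi i xb = f xb ∧ ∀ i' : ι, fi i' xb = f xb → di i p ≤ di i' p) →
            y ∈ FSubdiff (fi i) xb ∧ ⟪y, p⟫ = di i p)} = OuterLim f xb :=
  union_eq_outerLim_piecewise_affine_general a b fi hfi f hf xb di hdi
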